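/- arXiv:2604.25194 — 3 statements merged into one kernel-verified Lean document; each statement's English description precedes it below -/
import Mathlib

section
/- Let 0 < c_1 < c_n < 1, η ∈ (0,1], N > 0, and n ≥ 1 an integer. Define I_e(η) = nN/(η(1−c_n η)) + c_n²/(2(1−c_n η)²) and I_s(η) = n(N/(η(1−c_1 η)) + c_1²/(2(1−c_1 η)²)). If N > c_1²/(2(c_n − c_1)), then I_e(η) > I_s(η). -/
/-! Per mode, the squeezed probe's squeezing term `c₁²/(2(1-c₁η)²)` is beaten by the extra energy
term that the entangled probe gains from its stronger squeezing: `N/(η(1-cₙη)) - N/(η(1-c₁η))`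
equals `N(cₙ-c₁)/((1-c₁η)(1-cₙη))`, which exceeds `N(cₙ-c₁)/(1-c₁η)² > c₁²/(2(1-c₁η)²)`.
Summing over the `n` modes and adding the nonnegative squeezing term of the entangled probe gives
the claim. -/

lemma one_sub_mul_pos {c η : ℝ} (hc : c < 1) (hη0 : 0 < η) (hη1 : η ≤ 1) : 0 < 1 - c * η := by
  nlinarith

lemma div_mul_one_sub_sub_div_mul_one_sub (N η a b : ℝ) (hη : η ≠ 0) (ha : 1 - a * η ≠ 0)
    (hb : 1 - b * η ≠ 0) :
    N / (η * (1 - b * η)) - N / (η * (1 - a * η)) = N * (b - a) / ((1 - a * η) * (1 - b * η)) := by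
  rw [div_sub_div _ _ (mul_ne_zero hη hb) (mul_ne_zero hη ha),
    div_eq_div_iff (by positivity) (mul_ne_zero ha hb)]
  ring

lemma squeezed_mode_lt_entangled_mode {c1 cn η N : ℝ} (hc1n : c1 < cn) (hη : 0 < η)
    (hA : 0 < 1 - cn * η) (hNbig : c1 ^ 2 < 2 * (cn - c1) * N) :
    N / (η * (1 - c1 * η)) + c1 ^ 2 / (2 * (1 - c1 * η) ^ 2) < N / (η * (1 - cn * η)) := by
  have hAB : 1 - cn * η < 1 - c1 * η := by nlinarith
  have hB : 0 < 1 - c1 * η := hA.trans hAB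
  have hgain : 0 < N * (cn - c1) := by nlinarith [sq_nonneg c1]
  have key : c1 ^ 2 / (2 * (1 - c1 * η) ^ 2) < N * (cn - c1) / ((1 - c1 * η) * (1 - cn * η)) :=
    calc c1 ^ 2 / (2 * (1 - c1 * η) ^ 2) < N * (cn - c1) / ((1 - c1 * η) * (1 - c1 * η)) := by
          rw [div_lt_div_iff₀ (by positivity) (by positivity)]
          nlinarith [mul_pos hB hB]
      _ < N * (cn - c1) / ((1 - c1 * η) * (1 - cn * η)) :=
          div_lt_div_of_pos_left hgain (mul_pos hB hA) (mul_lt_mul_of_pos_left hAB hB)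
  rw [← div_mul_one_sub_sub_div_mul_one_sub N η c1 cn hη.ne' hB.ne' hA.ne'] at key
  linarith

theorem stmt_3_general (c1 cn η N : ℝ) (n : ℕ) (hn : 1 ≤ n)
    (hc1n : c1 < cn) (hcn : cn < 1)
    (hη0 : 0 < η) (hη1 : η ≤ 1)
    (hNbig : N > c1 ^ 2 / (2 * (cn - c1))) :
    (n : ℝ) * N / (η * (1 - cn * η)) + cn ^ 2 / (2 * (1 - cn * η) ^ 2) >
      (n : ℝ) * (N / (η * (1 - c1 * η)) + c1 ^ 2 / (2 * (1 - c1 * η) ^ 2)) := by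
  have hNbig' : c1 ^ 2 < 2 * (cn - c1) * N := by
    rwa [gt_iff_lt, div_lt_iff₀ (by linarith), mul_comm] at hNbig
  have hmode := squeezed_mode_lt_entangled_mode hc1n hη0 (one_sub_mul_pos hcn hη0 hη1) hNbig'
  have hn' : (0 : ℝ) < n := by exact_mod_cast hn
  have hsq : 0 ≤ cn ^ 2 / (2 * (1 - cn * η) ^ 2) := by positivity
  rw [mul_div_assoc]
  linarith [mul_lt_mul_of_pos_left hmode hn']

theorem stmt_3 (c1 cn η N : ℝ) (n : ℕ) (hn : 1 ≤ n)
    (hc1 : 0 < c1) (hc1n : c1 < cn) (hcn : cn < 1)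
    (hη0 : 0 < η) (hη1 : η ≤ 1) (hN : 0 < N)
    (hNbig : N > c1 ^ 2 / (2 * (cn - c1))) :
    (n : ℝ) * N / (η * (1 - cn * η)) + cn ^ 2 / (2 * (1 - cn * η) ^ 2) >
      (n : ℝ) * (N / (η * (1 - c1 * η)) + c1 ^ 2 / (2 * (1 - c1 * η) ^ 2)) :=
  stmt_3_general c1 cn η N n hn hc1n hcn hη0 hη1 hNbig
end

section
/- Let 0 < c_n < 1, η ∈ (0,1], N > 0, N_a > 0, and n ≥ 1. Define I_e(η) = nN/(η(1−c_n η)) + c_n²/(2(1−c_n η)²) and I_c(η) = (N+N_a)n/η. If N > (1/(c_n η) − 1)·N_a, then I_e(η) > I_c(η). -/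
theorem stmt_4 (cn η N Na : ℝ) (n : ℕ) (hn : 1 ≤ n)
    (hcn0 : 0 < cn) (hcn1 : cn < 1)
    (hη0 : 0 < η) (hη1 : η ≤ 1) (hN : 0 < N) (hNa : 0 < Na)
    (hNbig : N > (1 / (cn * η) - 1) * Na) :
    (n : ℝ) * N / (η * (1 - cn * η)) + cn ^ 2 / (2 * (1 - cn * η) ^ 2) >
      (N + Na) * n / η := by
  have ht0 : 0 < cn * η := by positivity
  have ht : cn * η < 1 := by nlinarith
  have h1 : 0 < 1 - cn * η := by linarith
  have hn1 : (1:ℝ) ≤ n := by exact_mod_cast hn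
  have hkey : Na < (cn * η) * (N + Na) := by
    have h : (1 / (cn * η)) * Na < N + Na := by nlinarith
    rw [div_mul_eq_mul_div, div_lt_iff₀ ht0, one_mul] at h
    linarith
  have hpos : 0 < cn ^ 2 / (2 * (1 - cn * η) ^ 2) := by positivity
  have h2 : (N + Na) * n < (n:ℝ) * N / (1 - cn * η) := by
    rw [lt_div_iff₀ h1]
    nlinarith
  have e1 : (n:ℝ) * N / (η * (1 - cn * η)) * η = (n:ℝ) * N / (1 - cn * η) := by
    field_simp
  rw [gt_iff_lt, div_lt_iff₀ hη0, ← sub_pos]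
  nlinarith [mul_pos hpos hη0]
end

section
/- Let 0 < c_1 < 1, η ∈ (0,1], N > 0, N_a > 0, n ≥ 1. Define I_s(η) = n(N/(η(1−c_1 η)) + c_1²/(2(1−c_1 η)²)) and I_c(η) = (N+N_a)n/η. If N > (1/(c_1 η) − 1)·N_a, then I_s(η) > I_c(η). -/
theorem stmt_5 (c1 η N Na : ℝ) (n : ℕ) (hn : 1 ≤ n)
    (hc10 : 0 < c1) (hc11 : c1 < 1)
    (hη0 : 0 < η) (hη1 : η ≤ 1) (hN : 0 < N) (hNa : 0 < Na)
    (hNbig : N > (1 / (c1 * η) - 1) * Na) :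
    (n : ℝ) * (N / (η * (1 - c1 * η)) + c1 ^ 2 / (2 * (1 - c1 * η) ^ 2)) >
      (N + Na) * n / η := by
  have ht0 : 0 < c1 * η := mul_pos hc10 hη0
  have ht1 : c1 * η < 1 := by nlinarith
  have h1t : 0 < 1 - c1 * η := by linarith
  have hnpos : (0:ℝ) < n := by exact_mod_cast Nat.lt_of_lt_of_le Nat.zero_lt_one hn
  have hbig : N * (c1 * η) > Na * (1 - c1 * η) := by
    have := mul_lt_mul_of_pos_right hNbig ht0
    have h0 : (1 / (c1 * η) - 1) * Na * (c1 * η) = Na * (1 - c1 * η) := by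
      field_simp
    linarith [h0 ▸ this]
  have key : N / (η * (1 - c1 * η)) + c1 ^ 2 / (2 * (1 - c1 * η) ^ 2) > (N + Na) / η := by
    have h2 : N / (η * (1 - c1 * η)) > (N + Na) / η := by
      rw [gt_iff_lt, div_lt_div_iff₀ hη0 (mul_pos hη0 h1t)]
      nlinarith
    have h3 : 0 < c1 ^ 2 / (2 * (1 - c1 * η) ^ 2) := by positivity
    linarith
  calc (N + Na) * n / η = n * ((N + Na) / η) := by ring
    _ < n * (N / (η * (1 - c1 * η)) + c1 ^ 2 / (2 * (1 - c1 * η) ^ 2)) :=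
        mul_lt_mul_of_pos_left key hnpos
end
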